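/- Let h : ℝ₊ → ℝ be increasing and convex. Then the map (X₁,…,X_m) ↦ trace h(⊗_{i=1}^m X_i) on tuples of Hermitian positive definite matrices is jointly geodesically midpoint convex: trace h(⊗_i (A_i # B_i)) ≤ (1/2) trace h(⊗_i A_i) + (1/2) trace h(⊗_i B_i). -/

import Mathlib

/-!
Write `A_i # B_i = S_i R_i S_i` with `S_i = A_i^{1/2}` and
`R_i = (A_i^{-1/2} B_i A_i^{-1/2})^{1/2}`, so that `S_i² = A_i` and `S_i R_i² S_i = B_i`.
These identities are multiplicative under `⊗`, so with `S = ⊗ S_i`, `R = ⊗ R_i` and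
`G = ⊗ (A_i # B_i)` we get `⊗ A_i + ⊗ B_i - 2 G = S (1 - R)² S ⪰ 0`.
In an orthonormal eigenbasis of `G` this gives `2 λ_j(G) ≤ x_j + y_j`, where `x`, `y` are the
diagonals of `⊗ A_i`, `⊗ B_i` in that basis; as `h` is monotone and convex,
`∑ h(λ_j(G)) ≤ ½ ∑ h(x_j) + ½ ∑ h(y_j)`. Finally the diagonal of a Hermitian matrix in any
orthonormal basis is the image of its eigenvalues under a doubly stochastic matrix (`|W_jk|²`
for a unitary `W`), so Jensen gives `∑ h(x_j) ≤ trace h(⊗ A_i)` (Peierls' inequality), and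
likewise for `y`.
-/

set_option linter.unusedSectionVars false

namespace CGO

open Matrix
open scoped ComplexOrder

variable {n : Type*} [Fintype n] [DecidableEq n]

/-- The Löwner partial order `A ⪯ B` on matrices: `B - A` is positive semidefinite. -/
def LoewnerLE (A B : Matrix n n ℂ) : Prop := (B - A).PosSemidef

lemma cfc_isHermitian {A : Matrix n n ℂ} (hA : A.IsHermitian) (f : ℝ → ℝ) :
    (hA.cfc f).IsHermitian := by
  rw [Matrix.IsHermitian.cfc, Unitary.conjStarAlgAut_apply,
    Matrix.star_eq_conjTranspose]
  exact Matrix.isHermitian_mul_mul_conjTranspose _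
    (Matrix.isHermitian_diagonal_of_self_adjoint _ (by
      show star _ = _
      funext i; simp [Function.comp]))

/-- Real powers of a Hermitian matrix, defined through the spectral theorem
(for positive definite `A`, this is the usual power `A^t`). -/
noncomputable def mpow {A : Matrix n n ℂ} (hA : A.IsHermitian) (t : ℝ) : Matrix n n ℂ :=
  hA.cfc (fun x => x ^ t)

lemma mpow_isHermitian {A : Matrix n n ℂ} (hA : A.IsHermitian) (t : ℝ) :
    (mpow hA t).IsHermitian := cfc_isHermitian hA _

lemma mul_mul_isHermitian {A B : Matrix n n ℂ} (hA : A.IsHermitian) (hB : B.IsHermitian) :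
    (A * B * A).IsHermitian := by
  have h := Matrix.isHermitian_mul_mul_conjTranspose A hB
  rwa [hA.eq] at h

/-- The weighted matrix geometric mean `A #ₜ B := A^{1/2} (A^{-1/2} B A^{-1/2})^t A^{1/2}`.
The midpoint `t = 1/2` is the matrix geometric mean `A # B`. -/
noncomputable def wgmean {A B : Matrix n n ℂ} (hA : A.PosDef) (hB : B.PosDef) (t : ℝ) :
    Matrix n n ℂ :=
  mpow hA.1 (1/2) *
    mpow (mul_mul_isHermitian (mpow_isHermitian hA.1 (-(1/2))) hB.1) t *
    mpow hA.1 (1/2)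

lemma wgmean_isHermitian {A B : Matrix n n ℂ} (hA : A.PosDef) (hB : B.PosDef) (t : ℝ) :
    (wgmean hA hB t).IsHermitian := by
  have h := mul_mul_isHermitian (mpow_isHermitian hA.1 (1/2))
    (mpow_isHermitian (mul_mul_isHermitian (mpow_isHermitian hA.1 (-(1/2))) hB.1) t)
  simpa [wgmean, mul_assoc] using h

/-- The Kronecker product `X₁ ⊗ X₂ ⊗ ⋯ ⊗ X_m` of a family of square matrices. -/
noncomputable def bigKron {m : ℕ} {dd : Fin m → Type*} [∀ i, Fintype (dd i)]
    [∀ i, DecidableEq (dd i)] (A : ∀ i, Matrix (dd i) (dd i) ℂ) :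
    Matrix (∀ i, dd i) (∀ i, dd i) ℂ :=
  Matrix.of fun x y => ∏ i, A i (x i) (y i)

lemma bigKron_isHermitian {m : ℕ} {dd : Fin m → Type*} [∀ i, Fintype (dd i)]
    [∀ i, DecidableEq (dd i)] {A : ∀ i, Matrix (dd i) (dd i) ℂ}
    (hA : ∀ i, (A i).IsHermitian) : (bigKron A).IsHermitian := by
  ext x y
  simp only [bigKron, Matrix.conjTranspose_apply, Matrix.of_apply, star_prod]
  exact Finset.prod_congr rfl fun i _ => by
    rw [← Matrix.conjTranspose_apply, (hA i).eq]

lemma mpow_eq_cfc {A : Matrix n n ℂ} (hA : A.IsHermitian) (t : ℝ) :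
    mpow hA t = cfc (fun x : ℝ => x ^ t) A :=
  (hA.cfc_eq _).symm

lemma mpow_zero {A : Matrix n n ℂ} (hA : A.IsHermitian) : mpow hA 0 = 1 := by
  simp only [mpow_eq_cfc, Real.rpow_zero]
  exact cfc_const_one ℝ A

lemma mpow_one {A : Matrix n n ℂ} (hA : A.IsHermitian) : mpow hA 1 = A := by
  simp only [mpow_eq_cfc, Real.rpow_one]
  exact cfc_id' ℝ A hA.isSelfAdjoint

lemma mpow_mul_mpow_of_forall_eigenvalues {A : Matrix n n ℂ} (hA : A.IsHermitian) {s t : ℝ}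
    (hst : ∀ j, hA.eigenvalues j ^ s * hA.eigenvalues j ^ t = hA.eigenvalues j ^ (s + t)) :
    mpow hA s * mpow hA t = mpow hA (s + t) := by
  simp only [mpow_eq_cfc]
  rw [← cfc_mul _ _ A (A.finite_real_spectrum.continuousOn _)
    (A.finite_real_spectrum.continuousOn _)]
  refine cfc_congr ?_
  rw [hA.spectrum_real_eq_range_eigenvalues]
  rintro _ ⟨j, rfl⟩
  exact hst j

lemma mpow_add_of_posSemidef {A : Matrix n n ℂ} (hA : A.PosSemidef) {s t : ℝ} (hst : s + t ≠ 0) :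
    mpow hA.1 s * mpow hA.1 t = mpow hA.1 (s + t) :=
  mpow_mul_mpow_of_forall_eigenvalues hA.1 fun j =>
    (Real.rpow_add' (hA.eigenvalues_nonneg j) hst).symm

lemma mpow_add_of_posDef {A : Matrix n n ℂ} (hA : A.PosDef) (s t : ℝ) :
    mpow hA.1 s * mpow hA.1 t = mpow hA.1 (s + t) :=
  mpow_mul_mpow_of_forall_eigenvalues hA.1 fun j => (Real.rpow_add (hA.eigenvalues_pos j) s t).symm

open scoped MatrixOrder in
lemma posSemidef_mpow {A : Matrix n n ℂ} (hA : A.PosSemidef) (t : ℝ) :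
    (mpow hA.1 t).PosSemidef := by
  rw [mpow_eq_cfc, ← nonneg_iff_posSemidef]
  refine cfc_nonneg fun x hx => ?_
  rw [hA.1.spectrum_real_eq_range_eigenvalues] at hx
  obtain ⟨j, rfl⟩ := hx
  exact Real.rpow_nonneg (hA.eigenvalues_nonneg j) t

lemma mpow_half_mul_self {A : Matrix n n ℂ} (hA : A.PosSemidef) :
    mpow hA.1 (1/2) * mpow hA.1 (1/2) = A := by
  rw [mpow_add_of_posSemidef hA (by norm_num), show (1/2 + 1/2 : ℝ) = 1 by norm_num, mpow_one]

lemma exists_wgmean_half_eq {A B : Matrix n n ℂ} (hA : A.PosDef) (hB : B.PosDef) :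
    ∃ S R : Matrix n n ℂ, S.IsHermitian ∧ R.PosSemidef ∧
      S * S = A ∧ S * R * R * S = B ∧ wgmean hA hB (1/2) = S * R * S := by
  have hC : (mpow hA.1 (-(1/2)) * B * mpow hA.1 (-(1/2))).PosSemidef := by
    simpa only [(mpow_isHermitian hA.1 _).eq] using
      hB.posSemidef.mul_mul_conjTranspose_same (mpow hA.1 (-(1/2)))
  refine ⟨mpow hA.1 (1/2), mpow hC.1 (1/2), mpow_isHermitian _ _, posSemidef_mpow hC _,
    mpow_half_mul_self hA.posSemidef, ?_, rfl⟩
  have hST : mpow hA.1 (1/2) * mpow hA.1 (-(1/2)) = 1 := by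
    rw [mpow_add_of_posDef hA, add_neg_cancel, mpow_zero]
  have hTS : mpow hA.1 (-(1/2)) * mpow hA.1 (1/2) = 1 := by
    rw [mpow_add_of_posDef hA, neg_add_cancel, mpow_zero]
  calc _ = mpow hA.1 (1/2) * (mpow hC.1 (1/2) * mpow hC.1 (1/2)) * mpow hA.1 (1/2) := by
        simp only [mul_assoc]
    _ = (mpow hA.1 (1/2) * mpow hA.1 (-(1/2))) * B * (mpow hA.1 (-(1/2)) * mpow hA.1 (1/2)) := by
        rw [mpow_half_mul_self hC]; simp only [mul_assoc]
    _ = B := by rw [hST, hTS, one_mul, mul_one]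

lemma wgmean_half_posSemidef {A B : Matrix n n ℂ} (hA : A.PosDef) (hB : B.PosDef) :
    (wgmean hA hB (1/2)).PosSemidef := by
  obtain ⟨S, R, hS, hR, -, -, hG⟩ := exists_wgmean_half_eq hA hB
  rw [hG]
  simpa only [hS.eq] using hR.mul_mul_conjTranspose_same S

lemma loewnerLE_conj_two_mul_add_sq {S R : Matrix n n ℂ} (hS : S.IsHermitian)
    (hR : R.IsHermitian) : LoewnerLE (S * R * S + S * R * S) (S * S + S * R * R * S) := by
  have hsq : S * S + S * R * R * S - (S * R * S + S * R * S) = S * (1 - R) * (S * (1 - R))ᴴ := by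
    rw [conjTranspose_mul, conjTranspose_sub, conjTranspose_one, hS.eq, hR.eq]
    noncomm_ring
  rw [LoewnerLE, hsq]
  exact posSemidef_self_mul_conjTranspose _

section Kronecker

variable {m : ℕ} {dd : Fin m → Type*} [∀ i, Fintype (dd i)] [∀ i, DecidableEq (dd i)]

lemma bigKron_mul (A B : ∀ i, Matrix (dd i) (dd i) ℂ) :
    bigKron A * bigKron B = bigKron fun i => A i * B i := by
  ext x y
  simp only [bigKron, mul_apply, of_apply, Finset.prod_univ_sum, Fintype.piFinset_univ,
    Finset.prod_mul_distrib]

lemma bigKron_posSemidef {A : ∀ i, Matrix (dd i) (dd i) ℂ} (hA : ∀ i, (A i).PosSemidef) :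
    (bigKron A).PosSemidef := by
  have hS := bigKron_isHermitian fun i => mpow_isHermitian (hA i).1 (1/2)
  have hsq : (bigKron fun i => mpow (hA i).1 (1/2))ᴴ * bigKron (fun i => mpow (hA i).1 (1/2)) =
      bigKron A := by
    rw [hS.eq, bigKron_mul]
    exact congrArg bigKron (funext fun i => mpow_half_mul_self (hA i))
  exact hsq ▸ posSemidef_conjTranspose_mul_self _

lemma loewnerLE_bigKron_wgmean_half {A B : ∀ i, Matrix (dd i) (dd i) ℂ}
    (hA : ∀ i, (A i).PosDef) (hB : ∀ i, (B i).PosDef) :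
    LoewnerLE (bigKron (fun i => wgmean (hA i) (hB i) (1/2)) +
      bigKron (fun i => wgmean (hA i) (hB i) (1/2))) (bigKron A + bigKron B) := by
  choose S R hS hR hSS hSRRS hG using fun i => exists_wgmean_half_eq (hA i) (hB i)
  have hA' : bigKron A = bigKron S * bigKron S := by rw [bigKron_mul, ← funext hSS]
  have hB' : bigKron B = bigKron S * bigKron R * bigKron R * bigKron S := by
    rw [bigKron_mul, bigKron_mul, bigKron_mul, ← funext hSRRS]
  have hG' : bigKron (fun i => wgmean (hA i) (hB i) (1/2)) = bigKron S * bigKron R * bigKron S := by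
    rw [bigKron_mul, bigKron_mul, ← funext hG]
  rw [hA', hB', hG']
  exact loewnerLE_conj_two_mul_add_sq (bigKron_isHermitian hS)
    (bigKron_isHermitian fun i => (hR i).1)

end Kronecker

lemma sum_comp_mulVec_le_of_convexOn {s : Set ℝ} {h : ℝ → ℝ} (hconv : ConvexOn ℝ s h)
    {M : Matrix n n ℝ} (hM : M ∈ doublyStochastic ℝ n) {x : n → ℝ} (hx : ∀ k, x k ∈ s) :
    ∑ j, h ((M *ᵥ x) j) ≤ ∑ k, h (x k) :=
  calc ∑ j, h ((M *ᵥ x) j) ≤ ∑ j, ∑ k, M j k * h (x k) := by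
        gcongr with j
        simpa only [mulVec, dotProduct, smul_eq_mul] using
          hconv.map_sum_le (fun k _ => nonneg_of_mem_doublyStochastic hM)
            (sum_row_of_mem_doublyStochastic hM j) fun k _ => hx k
    _ = ∑ k, h (x k) := by
        simp only [Finset.sum_comm (γ := n), ← Finset.sum_mul, sum_col_of_mem_doublyStochastic hM,
          one_mul]

lemma normSq_mem_doublyStochastic {W : Matrix n n ℂ} (hW : W ∈ unitaryGroup n ℂ) :
    (of fun j k => ‖W j k‖ ^ 2) ∈ doublyStochastic ℝ n := by
  have hsum : ∀ (M : Matrix n n ℂ) (j : n), ((∑ k, ‖M j k‖ ^ 2 : ℝ) : ℂ) = (M * star M) j j :=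
    fun M j => by simp [mul_apply, RCLike.mul_conj]
  refine mem_doublyStochastic_iff_sum.2 ⟨fun _ _ => by simp only [of_apply]; positivity,
    fun j => ?_, fun k => ?_⟩
  · have := hsum W j
    rw [mem_unitaryGroup_iff.1 hW, one_apply_eq] at this
    exact_mod_cast this
  · have := hsum (star W) k
    rw [star_star, mem_unitaryGroup_iff'.1 hW, one_apply_eq] at this
    simp only [star_apply, norm_star] at this
    exact_mod_cast this

lemma re_diag_conj_eq_mulVec {P : Matrix n n ℂ} (hP : P.IsHermitian)
    (U : Matrix n n ℂ) (j : n) :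
    RCLike.re ((star U * P * U) j j) =
      ((of fun j k => ‖(star U * (hP.eigenvectorUnitary : Matrix n n ℂ)) j k‖ ^ 2) *ᵥ
        hP.eigenvalues) j := by
  set W := star U * (hP.eigenvectorUnitary : Matrix n n ℂ)
  have hconj : star U * P * U = W * diagonal (RCLike.ofReal ∘ hP.eigenvalues) * star W := by
    conv_lhs => rw [hP.spectral_theorem, Unitary.conjStarAlgAut_apply]
    simp only [W, star_mul, star_star, mul_assoc]
  rw [hconj, mul_apply]
  simp only [mul_diagonal, star_apply, mulVec, dotProduct, of_apply, map_sum]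
  refine Finset.sum_congr rfl fun k _ => ?_
  rw [Function.comp_apply, mul_right_comm, RCLike.star_def, RCLike.mul_conj]
  norm_cast

lemma sum_comp_re_diag_conj_le {P : Matrix n n ℂ} (hP : P.IsHermitian)
    {U : Matrix n n ℂ} (hU : U ∈ unitaryGroup n ℂ) {s : Set ℝ} {h : ℝ → ℝ}
    (hconv : ConvexOn ℝ s h) (hs : ∀ k, hP.eigenvalues k ∈ s) :
    ∑ j, h (RCLike.re ((star U * P * U) j j)) ≤ ∑ k, h (hP.eigenvalues k) := by
  simp only [re_diag_conj_eq_mulVec hP U]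
  exact sum_comp_mulVec_le_of_convexOn hconv (normSq_mem_doublyStochastic
    (mul_mem (Unitary.star_mem hU) (SetLike.coe_mem _))) hs

lemma re_diag_conj_eigenvectorUnitary {G : Matrix n n ℂ} (hG : G.IsHermitian)
    (j : n) : RCLike.re ((star (hG.eigenvectorUnitary : Matrix n n ℂ) * G *
      hG.eigenvectorUnitary) j j) = hG.eigenvalues j := by
  rw [← Unitary.conjStarAlgAut_star_apply (S := ℂ), hG.conjStarAlgAut_star_eigenvectorUnitary]
  simp

lemma le_half_add_half_of_monotoneOn_of_convexOn {s : Set ℝ} {h : ℝ → ℝ}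
    (hmono : MonotoneOn h s) (hconv : ConvexOn ℝ s h) {x a b : ℝ} (hx : x ∈ s) (ha : a ∈ s)
    (hb : b ∈ s) (hxab : x + x ≤ a + b) : h x ≤ (1/2) * h a + (1/2) * h b := by
  have hmid : (1/2 : ℝ) • a + (1/2 : ℝ) • b ∈ s :=
    hconv.1 ha hb (by norm_num) (by norm_num) (by norm_num)
  calc h x ≤ h ((1/2 : ℝ) • a + (1/2 : ℝ) • b) :=
        hmono hx hmid (by simp only [smul_eq_mul]; linarith)
    _ ≤ (1/2 : ℝ) • h a + (1/2 : ℝ) • h b :=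
        hconv.2 ha hb (by norm_num) (by norm_num) (by norm_num)

lemma re_diag_conj_nonneg {M : Matrix n n ℂ} (hM : M.PosSemidef) (U : Matrix n n ℂ) (j : n) :
    0 ≤ RCLike.re ((star U * M * U) j j) :=
  (RCLike.nonneg_iff.1 (hM.conjTranspose_mul_mul_same U).diag_nonneg).1

lemma sum_comp_eigenvalues_le_of_loewnerLE {G X Y : Matrix n n ℂ} (hG : G.PosSemidef)
    (hX : X.PosSemidef) (hY : Y.PosSemidef) (hGXY : LoewnerLE (G + G) (X + Y)) {h : ℝ → ℝ}
    (hmono : MonotoneOn h (Set.Ici 0)) (hconv : ConvexOn ℝ (Set.Ici 0) h) :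
    ∑ j, h (hG.1.eigenvalues j) ≤
      (1/2) * ∑ j, h (hX.1.eigenvalues j) + (1/2) * ∑ j, h (hY.1.eigenvalues j) := by
  set U : Matrix n n ℂ := (hG.1.eigenvectorUnitary : Matrix n n ℂ)
  have hU : U ∈ unitaryGroup n ℂ := SetLike.coe_mem _
  have hdiag : ∀ j, RCLike.re ((star U * G * U) j j) + RCLike.re ((star U * G * U) j j) ≤
      RCLike.re ((star U * X * U) j j) + RCLike.re ((star U * Y * U) j j) := fun j => by
    have := re_diag_conj_nonneg hGXY U j
    simp only [mul_add, add_mul, mul_sub, sub_mul, Matrix.add_apply, Matrix.sub_apply, map_add,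
      map_sub] at this
    linarith
  calc ∑ j, h (hG.1.eigenvalues j) = ∑ j, h (RCLike.re ((star U * G * U) j j)) := by
        simp only [U, re_diag_conj_eigenvectorUnitary]
    _ ≤ ∑ j, ((1/2) * h (RCLike.re ((star U * X * U) j j)) +
          (1/2) * h (RCLike.re ((star U * Y * U) j j))) := by
        gcongr with j
        exact le_half_add_half_of_monotoneOn_of_convexOn hmono hconv
          (re_diag_conj_nonneg hG U j) (re_diag_conj_nonneg hX U j)
          (re_diag_conj_nonneg hY U j) (hdiag j)
    _ = (1/2) * ∑ j, h (RCLike.re ((star U * X * U) j j)) +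
          (1/2) * ∑ j, h (RCLike.re ((star U * Y * U) j j)) := by
        rw [Finset.sum_add_distrib, Finset.mul_sum, Finset.mul_sum]
    _ ≤ (1/2) * ∑ j, h (hX.1.eigenvalues j) + (1/2) * ∑ j, h (hY.1.eigenvalues j) := by
        gcongr (1/2) * ?_ + (1/2) * ?_
        · exact sum_comp_re_diag_conj_le hX.1 hU hconv hX.eigenvalues_nonneg
        · exact sum_comp_re_diag_conj_le hY.1 hU hconv hY.eigenvalues_nonneg

/-- For increasing convex `h : ℝ₊ → ℝ`, the map
`(X₁,…,X_m) ↦ trace h(⊗ᵢ Xᵢ) = ∑_j h(λ_j(⊗ᵢ Xᵢ))` is jointly geodesically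
midpoint convex. -/
theorem trace_h_bigKron_gconvex {m : ℕ} {dd : Fin m → Type*} [∀ i, Fintype (dd i)]
    [∀ i, DecidableEq (dd i)] {h : ℝ → ℝ}
    (hmono : MonotoneOn h (Set.Ici 0)) (hconv : ConvexOn ℝ (Set.Ici 0) h)
    {A B : ∀ i, Matrix (dd i) (dd i) ℂ}
    (hA : ∀ i, (A i).PosDef) (hB : ∀ i, (B i).PosDef) :
    ∑ j, h ((bigKron_isHermitian
        (fun i => wgmean_isHermitian (hA i) (hB i) (1/2))).eigenvalues j) ≤
      (1/2) * ∑ j, h ((bigKron_isHermitian (fun i => (hA i).1)).eigenvalues j) +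
      (1/2) * ∑ j, h ((bigKron_isHermitian (fun i => (hB i).1)).eigenvalues j) :=
  sum_comp_eigenvalues_le_of_loewnerLE
    (bigKron_posSemidef fun i => wgmean_half_posSemidef (hA i) (hB i))
    (bigKron_posSemidef fun i => (hA i).posSemidef)
    (bigKron_posSemidef fun i => (hB i).posSemidef)
    (loewnerLE_bigKron_wgmean_half hA hB) hmono hconv

end CGO
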